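/- arXiv:2305.04016 — 3 statements merged into one kernel-verified Lean document; each statement's English description precedes it below -/
import Mathlib

section
/- Let n ≥ 2, s ∈ (0,1), and let φ be a Young function satisfying the doubling condition with constant K_φ < 2^{n/s}. Then ∫₀ᵗ (τ/φ(τ))^{s/(n-s)} dτ < ∞ for every t > 0. -/
open Filter MeasureTheory Set Real

/-!
Iterating the doubling condition along dyadic scales gives the power lower bound
`φ τ ≥ φ t / (K (t/τ)^β)` for `0 < τ ≤ t`, where `β = log₂ K`. Hence on `(0, t)` the integrand
is at most a constant times `τ ^ ((1 - β) s / (n - s))`, and this exponent exceeds `-1`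
exactly when `K < 2^{n/s}`.
-/

lemma ConvexOn.monotoneOn_Ici_of_isMinOn {f : ℝ → ℝ} {a : ℝ} (hf : ConvexOn ℝ (Ici a) f)
    (hmin : IsMinOn f (Ici a) a) : MonotoneOn f (Ici a) := by
  intro y hy z hz hyz
  rcases (mem_Ici.1 hy).eq_or_lt with rfl | hay
  · exact hmin hz
  · exact hf.le_right_of_left_le'' (mem_Ici.2 le_rfl) hz hay hyz (hmin hy)

section Doubling

variable {φ : ℝ → ℝ} {K : ℝ}

lemma one_le_of_doubling (hmono : MonotoneOn φ (Ioi 0)) (hpos : ∀ t > 0, 0 < φ t)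
    (hK : ∀ t > 0, φ (2 * t) ≤ K * φ t) : 1 ≤ K := by
  have h1 : φ 1 ≤ φ (2 * 1) := hmono (mem_Ioi.2 one_pos) (mem_Ioi.2 (by norm_num)) (by norm_num)
  have h2 : φ (2 * 1) ≤ K * φ 1 := hK 1 one_pos
  have := hpos 1 one_pos
  nlinarith

lemma apply_two_pow_mul_le_of_doubling (hK : ∀ t > 0, φ (2 * t) ≤ K * φ t) (hK0 : 0 ≤ K)
    (m : ℕ) {τ : ℝ} (hτ : 0 < τ) : φ (2 ^ m * τ) ≤ K ^ m * φ τ := by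
  induction m with
  | zero => simp
  | succ m ih =>
    calc φ (2 ^ (m + 1) * τ) = φ (2 * (2 ^ m * τ)) := by ring_nf
      _ ≤ K * φ (2 ^ m * τ) := hK _ (by positivity)
      _ ≤ K * (K ^ m * φ τ) := by gcongr
      _ = K ^ (m + 1) * φ τ := by ring

lemma le_mul_rpow_logb_mul_of_doubling (hmono : MonotoneOn φ (Ioi 0))
    (hpos : ∀ t > 0, 0 < φ t) (hK : ∀ t > 0, φ (2 * t) ≤ K * φ t) {τ t : ℝ} (hτ : 0 < τ)
    (hτt : τ ≤ t) : φ t ≤ K * (t / τ) ^ logb 2 K * φ τ := by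
  have hK1 : 1 ≤ K := one_le_of_doubling hmono hpos hK
  have hβ : 0 ≤ logb 2 K := logb_nonneg one_lt_two hK1
  obtain ⟨k, hk, hk'⟩ := exists_nat_pow_near ((one_le_div hτ).2 hτt) one_lt_two
  have ht_le : t ≤ 2 ^ (k + 1) * τ := ((div_lt_iff₀ hτ).1 hk').le
  have := (hpos τ hτ).le
  calc φ t ≤ φ (2 ^ (k + 1) * τ) := hmono (mem_Ioi.2 (hτ.trans_le hτt)) (mem_Ioi.2 (by positivity)) ht_le
    _ ≤ K ^ (k + 1) * φ τ := apply_two_pow_mul_le_of_doubling hK (by linarith) _ hτ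
    _ = K * ((2 : ℝ) ^ k) ^ logb 2 K * φ τ := by
      rw [← rpow_pow_comm zero_le_two, rpow_logb two_pos (by norm_num) (by linarith)]; ring
    _ ≤ K * (t / τ) ^ logb 2 K * φ τ := by gcongr

lemma div_le_mul_rpow_of_doubling (hmono : MonotoneOn φ (Ioi 0))
    (hpos : ∀ t > 0, 0 < φ t) (hK : ∀ t > 0, φ (2 * t) ≤ K * φ t) {τ t : ℝ} (hτ : 0 < τ)
    (hτt : τ ≤ t) : τ / φ τ ≤ K * t ^ logb 2 K / φ t * τ ^ (1 - logb 2 K) := by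
  have hφτ := hpos τ hτ
  have hφt := hpos t (hτ.trans_le hτt)
  have hτβ : 0 < τ ^ logb 2 K := rpow_pos_of_pos hτ _
  rw [rpow_sub hτ, rpow_one, div_le_iff₀ hφτ]
  calc τ = τ / φ t * φ t := by field_simp
    _ ≤ τ / φ t * (K * (t / τ) ^ logb 2 K * φ τ) := by
      gcongr; exact le_mul_rpow_logb_mul_of_doubling hmono hpos hK hτ hτt
    _ = K * t ^ logb 2 K / φ t * (τ / τ ^ logb 2 K) * φ τ := by
      rw [div_rpow (hτ.trans_le hτt).le hτ.le]; field_simp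

theorem integrableOn_div_rpow_of_doubling (hcont : ContinuousOn φ (Ioi 0))
    (hmono : MonotoneOn φ (Ioi 0)) (hpos : ∀ t > 0, 0 < φ t)
    (hK : ∀ t > 0, φ (2 * t) ≤ K * φ t) {a : ℝ} (ha : 0 ≤ a) (hKa : (logb 2 K - 1) * a < 1)
    {t : ℝ} (ht : 0 < t) : IntegrableOn (fun τ => (τ / φ τ) ^ a) (Ioo 0 t) := by
  set C := K * t ^ logb 2 K / φ t
  have hC : 0 ≤ C := by
    have := one_le_of_doubling hmono hpos hK
    have := hpos t ht
    positivity
  have hbound : ∀ τ ∈ Ioo 0 t, ‖(τ / φ τ) ^ a‖ ≤ C ^ a * τ ^ ((1 - logb 2 K) * a) := by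
    rintro τ ⟨hτ, hτt⟩
    have hq : 0 ≤ τ / φ τ := div_nonneg hτ.le (hpos τ hτ).le
    rw [norm_of_nonneg (rpow_nonneg hq a), rpow_mul hτ.le, ← mul_rpow hC (by positivity)]
    exact rpow_le_rpow hq (div_le_mul_rpow_of_doubling hmono hpos hK hτ hτt.le) ha
  have hmeas : AEStronglyMeasurable (fun τ => (τ / φ τ) ^ a) (volume.restrict (Ioo 0 t)) :=
    ((continuousOn_id.div hcont fun x hx => (hpos x hx).ne').rpow_const
      fun _ _ => Or.inr ha).mono Ioo_subset_Ioi_self |>.aestronglyMeasurable measurableSet_Ioo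
  have hpow : IntegrableOn (fun τ => τ ^ ((1 - logb 2 K) * a)) (Ioo 0 t) :=
    (intervalIntegral.integrableOn_Ioo_rpow_iff ht).2 (by linarith)
  exact (hpow.const_mul (C ^ a)).mono' hmeas
    ((ae_restrict_iff' measurableSet_Ioo).2 (ae_of_all _ hbound))

end Doubling

theorem young_integral_finite_general (n : ℕ) (hn : 2 ≤ n) (s : ℝ) (hs : s ∈ Set.Ioo (0:ℝ) 1)
    (φ : ℝ → ℝ)
    (hconv : ConvexOn ℝ (Set.Ici 0) φ)
    (h0 : φ 0 = 0) (hpos : ∀ t > 0, 0 < φ t)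
    (K : ℝ) (hK : ∀ t > 0, φ (2 * t) ≤ K * φ t) (hKlt : K < 2 ^ ((n : ℝ) / s)) :
    ∀ t > 0, IntegrableOn (fun τ => (τ / φ τ) ^ (s / ((n : ℝ) - s))) (Set.Ioo 0 t) := by
  intro t ht
  obtain ⟨hs0, hs1⟩ := hs
  have hns : 0 < (n : ℝ) - s := by
    have : (2 : ℝ) ≤ n := by exact_mod_cast hn
    linarith
  have hmin : IsMinOn φ (Ici 0) 0 := isMinOn_iff.2 fun x (hx : 0 ≤ x) => by
    rcases hx.eq_or_lt with rfl | hx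
    exacts [le_rfl, h0.symm ▸ (hpos x hx).le]
  have hmono := (hconv.monotoneOn_Ici_of_isMinOn hmin).mono Ioi_subset_Ici_self
  have hcont : ContinuousOn φ (Ioi 0) := interior_Ici (a := (0 : ℝ)) ▸ hconv.continuousOn_interior
  have hK1 := one_le_of_doubling hmono hpos hK
  have hlogb : logb 2 K * s < n :=
    (lt_div_iff₀ hs0).1 ((logb_lt_iff_lt_rpow one_lt_two (by linarith)).2 hKlt)
  refine integrableOn_div_rpow_of_doubling hcont hmono hpos hK (div_pos hs0 hns).le ?_ ht
  rw [← mul_div_assoc, div_lt_one hns]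
  linarith

/-- If φ is a Young function with doubling constant `K < 2^{n/s}`, then
`∫₀ᵗ (τ/φ(τ))^{s/(n-s)} dτ < ∞` for every `t > 0`. -/
theorem young_integral_finite (n : ℕ) (hn : 2 ≤ n) (s : ℝ) (hs : s ∈ Set.Ioo (0:ℝ) 1)
    (φ : ℝ → ℝ)
    (hconv : ConvexOn ℝ (Set.Ici 0) φ) (hcont : Continuous φ)
    (h0 : φ 0 = 0) (hpos : ∀ t > 0, 0 < φ t)
    (htop : Tendsto φ atTop atTop)
    (K : ℝ) (hK : ∀ t > 0, φ (2 * t) ≤ K * φ t) (hKlt : K < 2 ^ ((n : ℝ) / s)) :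
    ∀ t > 0, IntegrableOn (fun τ => (τ / φ τ) ^ (s / ((n : ℝ) - s))) (Set.Ioo 0 t) :=
  young_integral_finite_general n hn s hs φ hconv h0 hpos K hK hKlt
end

section
/- Let n ≥ 2, s ∈ (0,1), and let φ be a Young function satisfying the doubling condition with constant K_φ < 2^{n/s}. Then ∫₀^∞ (τ/φ(τ))^{s/(n-s)} dτ = ∞. -/
open Filter MeasureTheory Set
open scoped ENNReal

/-!
With `p = s / (n - s)` and `f τ = (τ / φ τ) ^ p`, doubling gives `f τ ≤ (K / 2) ^ p f (2τ)`, and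
`K < 2 ^ (n / s)` says exactly that `(K / 2) ^ p < 2`. Hence `f τ ≤ 2 f (2τ)`, so the substitution
`τ ↦ 2τ` shows that the integral of `f` over each dyadic block `(2 ^ m, 2 ^ (m + 1)]` is at least
its (positive) integral over `(1, 2]`; summing over the blocks gives `∞`.
-/

lemma setLIntegral_Ioc_mul_left {a : ℝ} (ha : 0 < a) {f : ℝ → ℝ≥0∞} (hf : Measurable f)
    (c d : ℝ) :
    ∫⁻ x in Ioc (a * c) (a * d), f x = ENNReal.ofReal a * ∫⁻ x in Ioc c d, f (a * x) := by
  have hpre : (a * ·) ⁻¹' Ioc (a * c) (a * d) = Ioc c d := by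
    rw [preimage_const_mul_Ioc₀ _ _ ha, mul_div_cancel_left₀ _ ha.ne',
      mul_div_cancel_left₀ _ ha.ne']
  rw [← hpre, ← setLIntegral_map measurableSet_Ioc hf (measurable_const_mul a),
    Real.map_volume_mul_left ha.ne', Measure.restrict_smul, lintegral_smul_measure, smul_eq_mul,
    ← mul_assoc, ← ENNReal.ofReal_mul ha.le, abs_of_pos (inv_pos.2 ha),
    mul_inv_cancel₀ ha.ne', ENNReal.ofReal_one, one_mul]

section DyadicBlocks

variable {f : ℝ → ℝ≥0∞}

lemma setLIntegral_Ioc_le_setLIntegral_Ioc_two_mul (hf : Measurable f)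
    (hdbl : ∀ x > 0, f x ≤ 2 * f (2 * x)) {c d : ℝ} (hc : 0 ≤ c) :
    ∫⁻ x in Ioc c d, f x ≤ ∫⁻ x in Ioc (2 * c) (2 * d), f x := by
  rw [setLIntegral_Ioc_mul_left two_pos hf, ENNReal.ofReal_ofNat,
    ← lintegral_const_mul' _ _ ENNReal.ofNat_ne_top]
  exact setLIntegral_mono (by fun_prop) fun x hx => hdbl x (hc.trans_lt hx.1)

lemma setLIntegral_Ioc_one_two_le_setLIntegral_Ioc_two_pow (hf : Measurable f)
    (hdbl : ∀ x > 0, f x ≤ 2 * f (2 * x)) (m : ℕ) :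
    ∫⁻ x in Ioc 1 2, f x ≤ ∫⁻ x in Ioc (2 ^ m) (2 ^ (m + 1)), f x := by
  induction m with
  | zero => simp
  | succ m ih =>
    refine ih.trans ?_
    have h := setLIntegral_Ioc_le_setLIntegral_Ioc_two_mul hf hdbl
      (c := 2 ^ m) (d := 2 ^ (m + 1)) (by positivity)
    rwa [← pow_succ', ← pow_succ'] at h

lemma lintegral_Ioi_zero_eq_top_of_le_two_mul (hf : Measurable f)
    (hdbl : ∀ x > 0, f x ≤ 2 * f (2 * x)) (hpos : ∀ x > 0, f x ≠ 0) :
    ∫⁻ x in Ioi 0, f x = ∞ := by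
  have hbase : ∫⁻ x in Ioc 1 2, f x ≠ 0 := by
    refine ((setLIntegral_pos_iff hf).2 ?_).ne'
    have hsupp : Ioc (1 : ℝ) 2 ⊆ Function.support f := fun x hx => hpos x (one_pos.trans hx.1)
    simp [inter_eq_right.2 hsupp]
  have hdisj := (pow_right_mono₀ (M₀ := ℝ) one_le_two).pairwise_disjoint_on_Ioc_succ
  rw [eq_top_iff]
  calc ∞ = ∑' _ : ℕ, ∫⁻ x in Ioc 1 2, f x := (ENNReal.tsum_const_eq_top_of_ne_zero hbase).symm
    _ ≤ ∑' m : ℕ, ∫⁻ x in Ioc (2 ^ m) (2 ^ (m + 1)), f x :=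
      ENNReal.tsum_le_tsum (setLIntegral_Ioc_one_two_le_setLIntegral_Ioc_two_pow hf hdbl)
    _ = ∫⁻ x in ⋃ m : ℕ, Ioc (2 ^ m) (2 ^ (m + 1)), f x :=
      (lintegral_iUnion (fun _ => measurableSet_Ioc) hdisj f).symm
    _ ≤ ∫⁻ x in Ioi 0, f x :=
      lintegral_mono_set (iUnion_subset fun m _ hx => (pow_pos two_pos m).trans hx.1)

end DyadicBlocks

lemma rpow_le_two_rpow_one_add {K n s : ℝ} (hK : 0 ≤ K) (hs : 0 < s) (hsn : s < n)
    (hKlt : K ≤ 2 ^ (n / s)) :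
    K ^ (s / (n - s)) ≤ 2 ^ (1 + s / (n - s)) := by
  have hns : n - s ≠ 0 := (sub_pos.2 hsn).ne'
  calc K ^ (s / (n - s)) ≤ (2 ^ (n / s)) ^ (s / (n - s)) :=
        Real.rpow_le_rpow hK hKlt (div_nonneg hs.le (sub_pos.2 hsn).le)
    _ = 2 ^ (1 + s / (n - s)) := by
        rw [← Real.rpow_mul zero_le_two]
        congr 1
        field_simp
        ring

lemma rpow_div_le_two_mul_rpow_two_mul_div {φ : ℝ → ℝ} {K p x : ℝ} (hp : 0 ≤ p)
    (hKp : K ^ p ≤ 2 ^ (1 + p)) (hx : 0 ≤ x) (hφx : 0 < φ x) (hφ2x : 0 < φ (2 * x))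
    (hdbl : φ (2 * x) ≤ K * φ x) :
    (x / φ x) ^ p ≤ 2 * (2 * x / φ (2 * x)) ^ p := by
  have hK : 0 < K := pos_of_mul_pos_left (hφ2x.trans_le hdbl) hφx.le
  have hscale : (2 / K) * (x / φ x) ≤ 2 * x / φ (2 * x) := by
    rw [div_mul_div_comm]
    gcongr
  have hc : 1 ≤ 2 * (2 / K) ^ p := by
    rw [Real.div_rpow zero_le_two hK.le, mul_div_assoc', one_le_div (by positivity),
      ← Real.rpow_one_add' zero_le_two (by positivity)]
    exact hKp
  calc (x / φ x) ^ p ≤ 2 * (2 / K) ^ p * (x / φ x) ^ p := le_mul_of_one_le_left (by positivity) hc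
    _ = 2 * ((2 / K) * (x / φ x)) ^ p := by
        rw [Real.mul_rpow (by positivity) (by positivity), mul_assoc]
    _ ≤ 2 * (2 * x / φ (2 * x)) ^ p := by gcongr

theorem young_integral_infinite_general (n : ℕ) (hn : 2 ≤ n) (s : ℝ) (hs : s ∈ Set.Ioo (0:ℝ) 1)
    (φ : ℝ → ℝ)
    (hcont : Continuous φ)
    (hpos : ∀ t > 0, 0 < φ t)
    (K : ℝ) (hK : ∀ t > 0, φ (2 * t) ≤ K * φ t) (hKlt : K < 2 ^ ((n : ℝ) / s)) :
    ∫⁻ τ in Set.Ioi (0:ℝ), ENNReal.ofReal ((τ / φ τ) ^ (s / ((n : ℝ) - s))) = ⊤ := by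
  obtain ⟨hs0, hs1⟩ := hs
  have hsn : s < n := by
    have : (2 : ℝ) ≤ n := by exact_mod_cast hn
    linarith
  have hK0 : 0 ≤ K :=
    (pos_of_mul_pos_left ((hpos 2 two_pos).trans_le (by simpa using hK 1 one_pos))
      (hpos 1 one_pos).le).le
  set p := s / ((n : ℝ) - s)
  have hp : 0 ≤ p := div_nonneg hs0.le (sub_pos.2 hsn).le
  have hKp : K ^ p ≤ 2 ^ (1 + p) := rpow_le_two_rpow_one_add hK0 hs0 hsn hKlt.le
  have hmeas := hcont.measurable
  refine lintegral_Ioi_zero_eq_top_of_le_two_mul (by fun_prop) (fun x hx => ?_) (fun x hx => ?_)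
  · rw [← ENNReal.ofReal_ofNat, ← ENNReal.ofReal_mul zero_le_two]
    exact ENNReal.ofReal_le_ofReal (rpow_div_le_two_mul_rpow_two_mul_div hp hKp hx.le
      (hpos x hx) (hpos _ (by positivity)) (hK x hx))
  · have := hpos x hx
    exact (ENNReal.ofReal_pos.2 (by positivity)).ne'

/-- If φ is a Young function with doubling constant `K < 2^{n/s}`, then
`∫₀^∞ (τ/φ(τ))^{s/(n-s)} dτ = ∞`. -/
theorem young_integral_infinite (n : ℕ) (hn : 2 ≤ n) (s : ℝ) (hs : s ∈ Set.Ioo (0:ℝ) 1)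
    (φ : ℝ → ℝ)
    (hconv : ConvexOn ℝ (Set.Ici 0) φ) (hcont : Continuous φ)
    (h0 : φ 0 = 0) (hpos : ∀ t > 0, 0 < φ t)
    (htop : Tendsto φ atTop atTop)
    (K : ℝ) (hK : ∀ t > 0, φ (2 * t) ≤ K * φ t) (hKlt : K < 2 ^ ((n : ℝ) / s)) :
    ∫⁻ τ in Set.Ioi (0:ℝ), ENNReal.ofReal ((τ / φ τ) ^ (s / ((n : ℝ) - s))) = ⊤ :=
  young_integral_infinite_general n hn s hs φ hcont hpos K hK hKlt
end

section
/- Let n ≥ 2, s ∈ (0,1), and let φ be a Young function with doubling constant K_φ < 2^{n/s}. Define H(t) = (∫₀ᵗ (τ/φ(τ))^{s/(n-s)} dτ)^{(n-s)/n} and φ_{n/s} := φ ∘ H^{-1}. Then φ_{n/s} satisfies the ∇₂ condition: with a = 2^{(n-s)/s} > 1, one has φ_{n/s}(x) ≤ (1/(2a)) φ_{n/s}(a x) for all x ≥ 0. -/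
/-!
Write `g τ = (τ / φ τ) ^ (s / (n - s))`, `λ = 2 ^ (n / s)` and `a = 2 ^ ((n - s) / s)`, so that
`λ = 2 a` and `λ ^ ((n - s) / n) = a`. Convexity and `φ 0 = 0` give `λ φ σ ≤ φ (λ σ)`, hence
`g (λ σ) ≤ g σ`, and the substitution `τ = λ σ` yields `∫₀^{λ t} g ≤ λ ∫₀^t g`, i.e.
`H (λ t) ≤ a H t`. Since `H` is increasing, `λ H⁻¹ x ≤ H⁻¹ (a x)`, and then
`2 a φ (H⁻¹ x) ≤ φ (λ H⁻¹ x) ≤ φ (H⁻¹ (a x))`.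
-/

open Filter MeasureTheory Set

namespace ConvexOn

variable {φ : ℝ → ℝ}

theorem mul_le_map_mul (hφ : ConvexOn ℝ (Ici 0) φ) (h0 : φ 0 = 0) {c y : ℝ} (hc : 1 ≤ c)
    (hy : 0 ≤ y) : c * φ y ≤ φ (c * y) := by
  have hc0 : 0 < c := by linarith
  have hconv := hφ.2 (mem_Ici.2 le_rfl) (mem_Ici.2 (by positivity : 0 ≤ c * y))
    (sub_nonneg.2 (inv_le_one_of_one_le₀ hc)) (inv_nonneg.2 hc0.le) (sub_add_cancel 1 c⁻¹)
  simp only [smul_eq_mul, mul_zero, zero_add, h0, inv_mul_cancel_left₀ hc0.ne'] at hconv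
  exact (le_inv_mul_iff₀ hc0).1 hconv

theorem monotoneOn_Ici (hφ : ConvexOn ℝ (Ici 0) φ) (h0 : φ 0 = 0)
    (hnonneg : ∀ t ≥ 0, 0 ≤ φ t) : MonotoneOn φ (Ici 0) := by
  intro u hu v _ huv
  rcases (mem_Ici.1 hu).eq_or_lt with rfl | hu0
  · rw [h0]; exact hnonneg v (le_trans hu huv)
  calc φ u ≤ v / u * φ u := le_mul_of_one_le_left (hnonneg u hu) ((one_le_div hu0).2 huv)
    _ ≤ φ (v / u * u) := hφ.mul_le_map_mul h0 ((one_le_div hu0).2 huv) hu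
    _ = φ v := by rw [div_mul_cancel₀ v hu0.ne']

theorem rpow_mul_div_map_mul_le (hφ : ConvexOn ℝ (Ici 0) φ) (h0 : φ 0 = 0) {c σ p : ℝ}
    (hc : 1 ≤ c) (hσ : 0 < σ) (hφσ : 0 < φ σ) (hp : 0 ≤ p) :
    (c * σ / φ (c * σ)) ^ p ≤ (σ / φ σ) ^ p := by
  have hc0 : 0 < c := by linarith
  have hsuper := hφ.mul_le_map_mul h0 hc hσ.le
  have hφcσ : 0 < φ (c * σ) := lt_of_lt_of_le (by positivity) hsuper
  refine Real.rpow_le_rpow (by positivity) ?_ hp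
  calc c * σ / φ (c * σ) ≤ c * σ / (c * φ σ) := by gcongr
    _ = σ / φ σ := mul_div_mul_left σ (φ σ) hc0.ne'

end ConvexOn

theorem setIntegral_Ioo_zero_mul_le {f : ℝ → ℝ} {c t : ℝ} (hc : 0 < c) (ht : 0 ≤ t)
    (hf : IntegrableOn f (Ioo 0 t)) (hf_nonneg : ∀ τ > 0, 0 ≤ f τ)
    (hfc : ∀ σ > 0, f (c * σ) ≤ f σ) :
    ∫ τ in Ioo 0 (c * t), f τ ≤ c * ∫ τ in Ioo 0 t, f τ := by
  have hsubst : ∫ τ in Ioo 0 (c * t), f τ = c * ∫ σ in Ioo 0 t, f (c * σ) := by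
    rw [← integral_Ioc_eq_integral_Ioo, ← integral_Ioc_eq_integral_Ioo,
      ← intervalIntegral.integral_of_le ht, ← intervalIntegral.integral_of_le (by positivity),
      intervalIntegral.integral_comp_mul_left _ hc.ne', mul_zero, smul_eq_mul,
      mul_inv_cancel_left₀ hc.ne']
  rw [hsubst]
  refine mul_le_mul_of_nonneg_left (integral_mono_of_nonneg ?_ hf ?_) hc.le
  · exact ae_restrict_of_forall_mem measurableSet_Ioo fun σ hσ => hf_nonneg _ (mul_pos hc hσ.1)
  · exact ae_restrict_of_forall_mem measurableSet_Ioo fun σ hσ => hfc σ hσ.1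

theorem Real.rpow_div_eq_mul_rpow_sub_div {b : ℝ} (hb : 0 < b) (x : ℝ) {s : ℝ} (hs : s ≠ 0) :
    b ^ (x / s) = b * b ^ ((x - s) / s) := by
  rw [show x / s = 1 + (x - s) / s by field_simp; ring, Real.rpow_add hb, Real.rpow_one]

theorem Real.rpow_div_rpow_sub_div {b : ℝ} (hb : 0 ≤ b) {x s : ℝ} (hx : x ≠ 0) (hs : s ≠ 0) :
    (b ^ (x / s)) ^ ((x - s) / x) = b ^ ((x - s) / s) := by
  rw [← Real.rpow_mul hb]
  congr 1
  field_simp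

section PowerOfIntegral

variable {g H : ℝ → ℝ} {q : ℝ}

/-- A divergent integral has the junk value `0`, which would give `H t = H 0`. -/
theorem integrableOn_Ioo_of_injOn (hH : ∀ t, H t = (∫ τ in Ioo 0 t, g τ) ^ q) (hq : q ≠ 0)
    (hinj : InjOn H (Ici 0)) (t : ℝ) : IntegrableOn g (Ioo 0 t) := by
  rcases le_or_gt t 0 with ht | ht
  · simp [Ioo_eq_empty_of_le ht]
  by_contra hg
  have hHt : H t = H 0 := by simp [hH, integral_undef hg, Real.zero_rpow hq]
  exact ht.ne' (hinj ht.le (mem_Ici.2 le_rfl) hHt)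

theorem strictMonoOn_of_injOn (hH : ∀ t, H t = (∫ τ in Ioo 0 t, g τ) ^ q)
    (hg : ∀ τ > 0, 0 ≤ g τ) (hq : 0 < q) (hinj : InjOn H (Ici 0)) :
    StrictMonoOn H (Ici 0) := by
  refine MonotoneOn.strictMonoOn_of_injOn (fun u _ v _ huv => ?_) hinj
  rw [hH, hH]
  refine Real.rpow_le_rpow (setIntegral_nonneg measurableSet_Ioo fun τ hτ => hg τ hτ.1) ?_ hq.le
  exact setIntegral_mono_set (integrableOn_Ioo_of_injOn hH hq.ne' hinj v)
    (ae_restrict_of_forall_mem measurableSet_Ioo fun τ hτ => hg τ hτ.1)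
    (Eventually.of_forall (Ioo_subset_Ioo_right huv))

theorem map_mul_le_of_injOn (hH : ∀ t, H t = (∫ τ in Ioo 0 t, g τ) ^ q)
    (hg : ∀ τ > 0, 0 ≤ g τ) (hq : 0 < q) (hinj : InjOn H (Ici 0)) {c t : ℝ} (hc : 0 < c)
    (hgc : ∀ σ > 0, g (c * σ) ≤ g σ) (ht : 0 ≤ t) : H (c * t) ≤ c ^ q * H t := by
  have hI_nonneg : 0 ≤ ∫ τ in Ioo 0 t, g τ :=
    setIntegral_nonneg measurableSet_Ioo fun τ hτ => hg τ hτ.1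
  rw [hH, hH, ← Real.mul_rpow hc.le hI_nonneg]
  refine Real.rpow_le_rpow (setIntegral_nonneg measurableSet_Ioo fun τ hτ => hg τ hτ.1) ?_ hq.le
  exact setIntegral_Ioo_zero_mul_le hc ht (integrableOn_Ioo_of_injOn hH hq.ne' hinj t) hg hgc

end PowerOfIntegral

theorem sobolev_conjugate_nabla2_general (n : ℕ) (hn : 2 ≤ n) (s : ℝ) (hs : s ∈ Set.Ioo (0:ℝ) 1)
    (φ : ℝ → ℝ)
    (hconv : ConvexOn ℝ (Set.Ici 0) φ)
    (h0 : φ 0 = 0) (hpos : ∀ t > 0, 0 < φ t)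
    (H : ℝ → ℝ)
    (hH : ∀ t, H t = (∫ τ in Set.Ioo (0:ℝ) t, (τ / φ τ) ^ (s / ((n : ℝ) - s))) ^ (((n : ℝ) - s) / n))
    (Hinv : ℝ → ℝ)
    (hHinv : ∀ t ≥ (0:ℝ), H (Hinv t) = t ∧ Hinv (H t) = t ∧ 0 ≤ Hinv t) :
    ∀ x ≥ (0:ℝ),
      (φ ∘ Hinv) x ≤ (1 / (2 * 2 ^ (((n : ℝ) - s) / s))) * (φ ∘ Hinv) (2 ^ (((n : ℝ) - s) / s) * x) := by
  obtain ⟨hs0, hs1⟩ := hs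
  have hns : 0 < (n : ℝ) - s := by linarith [show (2 : ℝ) ≤ n by exact_mod_cast hn]
  set a : ℝ := 2 ^ (((n : ℝ) - s) / s)
  set lam : ℝ := 2 ^ ((n : ℝ) / s)
  have ha : 0 < a := by positivity
  have hlam : lam = 2 * a := Real.rpow_div_eq_mul_rpow_sub_div two_pos _ hs0.ne'
  have hlam_pow : lam ^ (((n : ℝ) - s) / n) = a :=
    Real.rpow_div_rpow_sub_div zero_le_two (by positivity) hs0.ne'
  have hlam_one : 1 ≤ lam := Real.one_le_rpow one_le_two (by positivity)
  have hφ_nonneg : ∀ t ≥ 0, 0 ≤ φ t := fun t ht =>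
    ht.eq_or_lt.elim (fun h => h ▸ h0.ge) fun h => (hpos t h).le
  have hg_nonneg : ∀ τ > 0, 0 ≤ (τ / φ τ) ^ (s / ((n : ℝ) - s)) := fun τ hτ => by
    have := hpos τ hτ; positivity
  have hinj : InjOn H (Ici 0) := fun u hu v hv huv => by
    rw [← (hHinv u hu).2.1, huv, (hHinv v hv).2.1]
  have hq : 0 < ((n : ℝ) - s) / n := by positivity
  intro x hx
  obtain ⟨hHx, -, hx_nonneg⟩ := hHinv x hx
  have hax := hHinv (a * x) (by positivity)
  have hscale : lam * Hinv x ≤ Hinv (a * x) := by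
    rw [← (strictMonoOn_of_injOn hH hg_nonneg hq hinj).le_iff_le (mem_Ici.2 (by positivity))
      hax.2.2, hax.1]
    calc H (lam * Hinv x) ≤ lam ^ (((n : ℝ) - s) / n) * H (Hinv x) :=
          map_mul_le_of_injOn hH hg_nonneg hq hinj (by positivity) (fun σ hσ =>
            hconv.rpow_mul_div_map_mul_le h0 hlam_one hσ (hpos σ hσ) (by positivity)) hx_nonneg
      _ = a * x := by rw [hlam_pow, hHx]
  calc φ (Hinv x) = 1 / (2 * a) * (lam * φ (Hinv x)) := by rw [hlam]; field_simp
    _ ≤ 1 / (2 * a) * φ (lam * Hinv x) := by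
      gcongr; exact hconv.mul_le_map_mul h0 hlam_one hx_nonneg
    _ ≤ 1 / (2 * a) * φ (Hinv (a * x)) := by
      gcongr
      exact hconv.monotoneOn_Ici h0 hφ_nonneg (mem_Ici.2 (by positivity))
        (mem_Ici.2 hax.2.2) hscale

/-- If φ is a Young function with doubling constant `K < 2^{n/s}`, then the Sobolev
conjugate `φ_{n/s} = φ ∘ H⁻¹` satisfies the ∇₂ condition with `a = 2^{(n-s)/s}`. -/
theorem sobolev_conjugate_nabla2 (n : ℕ) (hn : 2 ≤ n) (s : ℝ) (hs : s ∈ Set.Ioo (0:ℝ) 1)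
    (φ : ℝ → ℝ)
    (hconv : ConvexOn ℝ (Set.Ici 0) φ) (hcont : Continuous φ)
    (h0 : φ 0 = 0) (hpos : ∀ t > 0, 0 < φ t)
    (htop : Tendsto φ atTop atTop)
    (K : ℝ) (hK : ∀ t > 0, φ (2 * t) ≤ K * φ t) (hKlt : K < 2 ^ ((n : ℝ) / s))
    (H : ℝ → ℝ)
    (hH : ∀ t, H t = (∫ τ in Set.Ioo (0:ℝ) t, (τ / φ τ) ^ (s / ((n : ℝ) - s))) ^ (((n : ℝ) - s) / n))
    (Hinv : ℝ → ℝ)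
    (hHinv : ∀ t ≥ (0:ℝ), H (Hinv t) = t ∧ Hinv (H t) = t ∧ 0 ≤ Hinv t) :
    ∀ x ≥ (0:ℝ),
      (φ ∘ Hinv) x ≤ (1 / (2 * 2 ^ (((n : ℝ) - s) / s))) * (φ ∘ Hinv) (2 ^ (((n : ℝ) - s) / s) * x) :=
  sobolev_conjugate_nabla2_general n hn s hs φ hconv h0 hpos H hH Hinv hHinv
end
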